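/- arXiv:0907.1265 — 4 statements merged into one kernel-verified Lean document; each statement's English description precedes it below -/
import Mathlib

section
/- For f continuous on [0,1], the composition f ∘ G is continuous on [0,1] if and only if f is a constant function. -/
/-- The Gauss map `G(0) = 0`, `G(x) = 1/x - ⌊1/x⌋` for `x ≠ 0`. -/
noncomputable def gaussMap (x : ℝ) : ℝ := if x = 0 then 0 else 1 / x - ↑⌊1 / x⌋

lemma gaussMap_mem (x : ℝ) : gaussMap x ∈ Set.Icc (0 : ℝ) 1 := by
  unfold gaussMap
  split
  · simp
  · have h1 := Int.fract_nonneg (1 / x)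
    have h2 := Int.fract_lt_one (1 / x)
    rw [Int.fract] at h1 h2
    constructor <;> linarith

lemma gaussMap_zero : gaussMap 0 = 0 := by simp [gaussMap]

lemma gaussMap_eq (n : ℕ) (c : ℝ) (hc : c ∈ Set.Ico (0 : ℝ) 1) :
    gaussMap (1 / ((n : ℝ) + 1 + c)) = c := by
  have hpos : (0 : ℝ) < (n : ℝ) + 1 + c := by
    have : (0 : ℝ) ≤ (n : ℝ) := Nat.cast_nonneg n
    linarith [hc.1]
  have hne : (1 : ℝ) / ((n : ℝ) + 1 + c) ≠ 0 := by positivity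
  have hinv : 1 / ((1 : ℝ) / ((n : ℝ) + 1 + c)) = (n : ℝ) + 1 + c :=
    one_div_one_div _
  have hfloor : ⌊(n : ℝ) + 1 + c⌋ = (n : ℤ) + 1 := by
    have : (n : ℝ) + 1 + c = ((n : ℤ) + 1 : ℤ) + c := by push_cast; ring
    rw [this, Int.floor_intCast_add]
    have : ⌊c⌋ = 0 := Int.floor_eq_zero_iff.2 (by exact ⟨hc.1, hc.2⟩)
    omega
  simp only [gaussMap, hne, if_false, hinv, hfloor]
  push_cast
  ring

/-- For `f` continuous on `[0,1]`, `f ∘ G` is continuous on `[0,1]` iff `f` is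
constant on `[0,1]`. -/
theorem continuousOn_comp_gaussMap_iff_const (f : ℝ → ℝ)
    (hf : ContinuousOn f (Set.Icc (0 : ℝ) 1)) :
    ContinuousOn (f ∘ gaussMap) (Set.Icc (0 : ℝ) 1) ↔
      ∀ x ∈ Set.Icc (0 : ℝ) 1, ∀ y ∈ Set.Icc (0 : ℝ) 1, f x = f y := by
  constructor
  · intro h
    have key : ∀ c ∈ Set.Ico (0 : ℝ) 1, f c = f 0 := by
      intro c hc
      set u : ℕ → ℝ := fun n => 1 / ((n : ℝ) + 1 + c) with hu
      have hpos : ∀ n : ℕ, (0 : ℝ) < (n : ℝ) + 1 + c := by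
        intro n
        have : (0 : ℝ) ≤ (n : ℝ) := Nat.cast_nonneg n
        linarith [hc.1]
      have hmem : ∀ n, u n ∈ Set.Icc (0 : ℝ) 1 := by
        intro n
        constructor
        · exact le_of_lt (div_pos one_pos (hpos n))
        · simp only [hu]
          rw [div_le_one (hpos n)]
          have : (0 : ℝ) ≤ (n : ℝ) := Nat.cast_nonneg n
          linarith [hc.1]
      have hlim : Filter.Tendsto u Filter.atTop (nhds 0) := by
        have hg : Filter.Tendsto (fun n : ℕ => (n : ℝ) + 1 + c) Filter.atTop Filter.atTop := by
          apply Filter.tendsto_atTop_add_const_right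
          apply Filter.tendsto_atTop_add_const_right
          exact tendsto_natCast_atTop_atTop
        have := tendsto_inv_atTop_zero.comp hg
        refine this.congr fun n => ?_
        simp [hu, one_div]
      have hlimw : Filter.Tendsto u Filter.atTop (nhdsWithin 0 (Set.Icc (0 : ℝ) 1)) := by
        rw [tendsto_nhdsWithin_iff]
        exact ⟨hlim, Filter.Eventually.of_forall hmem⟩
      have h0 : ContinuousWithinAt (f ∘ gaussMap) (Set.Icc (0 : ℝ) 1) 0 :=
        h 0 (by norm_num)
      have htend : Filter.Tendsto (fun n => (f ∘ gaussMap) (u n)) Filter.atTop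
          (nhds ((f ∘ gaussMap) 0)) := h0.tendsto.comp hlimw
      have hval : ∀ n, (f ∘ gaussMap) (u n) = f c := by
        intro n
        simp only [Function.comp, hu]
        rw [gaussMap_eq n c hc]
      rw [Function.comp_apply, gaussMap_zero] at htend
      have : Filter.Tendsto (fun _ : ℕ => f c) Filter.atTop (nhds (f 0)) := by
        exact htend.congr hval
      exact tendsto_nhds_unique tendsto_const_nhds this
    have key1 : f 1 = f 0 := by
      have h1 : ContinuousWithinAt f (Set.Icc (0 : ℝ) 1) 1 := hf 1 (by norm_num)
      set v : ℕ → ℝ := fun n => 1 - 1 / ((n : ℝ) + 2) with hv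
      have hvmem : ∀ n, v n ∈ Set.Ico (0 : ℝ) 1 := by
        intro n
        have h2 : (0 : ℝ) < (n : ℝ) + 2 := by positivity
        constructor
        · have : 1 / ((n : ℝ) + 2) ≤ 1 / 2 := by
            apply one_div_le_one_div_of_le <;> [norm_num; linarith [Nat.cast_nonneg (α := ℝ) n]]
          simp only [hv]; linarith
        · simp only [hv]
          have : (0 : ℝ) < 1 / ((n : ℝ) + 2) := by positivity
          linarith
      have hvlim : Filter.Tendsto v Filter.atTop (nhds 1) := by
        have hg : Filter.Tendsto (fun n : ℕ => (n : ℝ) + 2) Filter.atTop Filter.atTop := by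
          apply Filter.tendsto_atTop_add_const_right
          exact tendsto_natCast_atTop_atTop
        have h2 := tendsto_inv_atTop_zero.comp hg
        have h3 := (tendsto_const_nhds (x := (1 : ℝ)) (f := Filter.atTop (α := ℕ))).sub h2
        rw [hv]
        simpa [one_div] using h3
      have hvlimw : Filter.Tendsto v Filter.atTop (nhdsWithin 1 (Set.Icc (0 : ℝ) 1)) := by
        rw [tendsto_nhdsWithin_iff]
        refine ⟨hvlim, Filter.Eventually.of_forall fun n => ?_⟩
        exact ⟨(hvmem n).1, le_of_lt (hvmem n).2⟩
      have htend : Filter.Tendsto (fun n => f (v n)) Filter.atTop (nhds (f 1)) :=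
        h1.tendsto.comp hvlimw
      have : Filter.Tendsto (fun _ : ℕ => f 0) Filter.atTop (nhds (f 1)) := by
        refine htend.congr fun n => ?_
        exact key (v n) (hvmem n)
      exact (tendsto_nhds_unique tendsto_const_nhds this).symm
    have all : ∀ x ∈ Set.Icc (0 : ℝ) 1, f x = f 0 := by
      intro x hx
      rcases eq_or_lt_of_le hx.2 with h1 | h1
      · rw [h1]; exact key1
      · exact key x ⟨hx.1, h1⟩
    intro x hx y hy
    rw [all x hx, all y hy]
  · intro hconst
    have : ∀ x ∈ Set.Icc (0 : ℝ) 1, (f ∘ gaussMap) x = f 0 := by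
      intro x _
      exact hconst _ (gaussMap_mem x) 0 (by norm_num)
    exact continuousOn_const.congr this
end

section
/- For every continuous function f on [0,1], the series Σ_{s=1}^∞ f(1/(θ+s)) · (1+θ)/((θ+s)(θ+s+1)) converges for each θ ∈ [0,1] and defines a continuous function 𝔾(f) on [0,1]. -/
/-! The series is dominated on `[0,1]` by `sup |f| · 2 / (n+1)²`, so the Weierstrass M-test
gives both its convergence and the continuity of its sum. -/

/-- The Gauss (Perron–Frobenius) operator
`𝔾(f)(θ) = Σ_{s=1}^∞ f(1/(θ+s)) · (1+θ)/((θ+s)(θ+s+1))`;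
the summation index `n : ℕ` corresponds to `s = n + 1`. -/
noncomputable def gaussOp (f : ℝ → ℝ) (θ : ℝ) : ℝ :=
  ∑' n : ℕ, f (1 / (θ + (n : ℝ) + 1)) *
    ((1 + θ) / ((θ + (n : ℝ) + 1) * (θ + (n : ℝ) + 2)))

open Set

noncomputable def gaussTerm (f : ℝ → ℝ) (n : ℕ) (θ : ℝ) : ℝ :=
  f (1 / (θ + n + 1)) * ((1 + θ) / ((θ + n + 1) * (θ + n + 2)))

lemma one_div_add_nat_add_one_mem_Icc {θ : ℝ} (hθ : 0 ≤ θ) (n : ℕ) :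
    1 / (θ + n + 1) ∈ Icc (0 : ℝ) 1 := by
  have hpos : (0 : ℝ) < θ + n + 1 := by positivity
  refine ⟨by positivity, (div_le_one hpos).2 ?_⟩
  linarith [n.cast_nonneg (α := ℝ)]

lemma summable_two_div_nat_add_one_sq : Summable fun n : ℕ => 2 / ((n : ℝ) + 1) ^ 2 := by
  have h := (summable_nat_add_iff 1).mpr (Real.summable_one_div_nat_pow.mpr one_lt_two)
  simpa [div_eq_mul_inv] using h.mul_left 2

lemma gaussWeight_nonneg {θ : ℝ} (hθ : 0 ≤ θ) (n : ℕ) :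
    0 ≤ (1 + θ) / ((θ + n + 1) * (θ + n + 2)) := by
  positivity

lemma gaussWeight_le {θ : ℝ} (hθ : θ ∈ Icc (0 : ℝ) 1) (n : ℕ) :
    (1 + θ) / ((θ + n + 1) * (θ + n + 2)) ≤ 2 / ((n : ℝ) + 1) ^ 2 := by
  have hn := n.cast_nonneg (α := ℝ)
  apply div_le_div₀ zero_le_two (by linarith [hθ.2]) (by positivity)
  nlinarith [hθ.1]

lemma norm_gaussTerm_le {f : ℝ → ℝ} {C : ℝ} (hC : ∀ x ∈ Icc (0 : ℝ) 1, ‖f x‖ ≤ C)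
    {θ : ℝ} (hθ : θ ∈ Icc (0 : ℝ) 1) (n : ℕ) :
    ‖gaussTerm f n θ‖ ≤ C * (2 / ((n : ℝ) + 1) ^ 2) := by
  rw [gaussTerm, norm_mul, Real.norm_of_nonneg (gaussWeight_nonneg hθ.1 n)]
  have hC0 : 0 ≤ C := (norm_nonneg _).trans (hC 0 (left_mem_Icc.2 zero_le_one))
  exact mul_le_mul (hC _ (one_div_add_nat_add_one_mem_Icc hθ.1 n)) (gaussWeight_le hθ n)
    (gaussWeight_nonneg hθ.1 n) hC0

lemma continuousOn_gaussTerm {f : ℝ → ℝ} (hf : ContinuousOn f (Icc 0 1)) (n : ℕ) :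
    ContinuousOn (gaussTerm f n) (Icc 0 1) := by
  have hden : ∀ θ ∈ Icc (0 : ℝ) 1, θ + n + 1 ≠ 0 := fun θ hθ => by
    have := hθ.1; positivity
  have hinv : ContinuousOn (fun θ : ℝ => 1 / (θ + n + 1)) (Icc 0 1) :=
    continuousOn_const.div (by fun_prop) hden
  refine (hf.comp hinv fun θ hθ => one_div_add_nat_add_one_mem_Icc hθ.1 n).mul ?_
  refine continuousOn_const.add continuousOn_id |>.div (by fun_prop) fun θ hθ => ?_
  have := hθ.1; positivity

/-- For `f` continuous on `[0,1]`, the series defining `𝔾(f)(θ)` converges for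
every `θ ∈ [0,1]` and `𝔾(f)` is continuous on `[0,1]`. -/
theorem gaussOp_summable_and_continuous (f : ℝ → ℝ)
    (hf : ContinuousOn f (Set.Icc (0 : ℝ) 1)) :
    (∀ θ ∈ Set.Icc (0 : ℝ) 1,
      Summable (fun n : ℕ => f (1 / (θ + (n : ℝ) + 1)) *
        ((1 + θ) / ((θ + (n : ℝ) + 1) * (θ + (n : ℝ) + 2))))) ∧
    ContinuousOn (gaussOp f) (Set.Icc (0 : ℝ) 1) := by
  obtain ⟨C, hC⟩ := isCompact_Icc.exists_bound_of_continuousOn hf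
  have hmajorant := summable_two_div_nat_add_one_sq.mul_left C
  exact ⟨fun θ hθ => hmajorant.of_norm_bounded (norm_gaussTerm_le hC hθ),
    continuousOn_tsum (continuousOn_gaussTerm hf) hmajorant
      fun n θ hθ => norm_gaussTerm_le hC hθ n⟩
end

section
/- For every n ≥ 0, max{ r(n,k+1) − r(n,k) : 0 ≤ k < 2^n } = 1/(n+1); that is, the largest gap between consecutive level-n Stern–Brocot fractions equals 1/(n+1). -/
/-- Stern–Brocot (Farey mediant) array: `sternBrocot n k = (p(n,k), q(n,k))`,
with `p(0,0)=0, p(0,1)=1, q(0,0)=q(0,1)=1`, `(p,q)(n+1,2k)=(p,q)(n,k)` and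
`(p,q)(n+1,2k+1)=(p,q)(n,k)+(p,q)(n,k+1)`. -/
def sternBrocot : ℕ → ℕ → ℕ × ℕ
  | 0, 0 => (0, 1)
  | 0, _ => (1, 1)
  | n + 1, k =>
    if k % 2 = 0 then sternBrocot n (k / 2)
    else
      ((sternBrocot n (k / 2)).1 + (sternBrocot n (k / 2 + 1)).1,
       (sternBrocot n (k / 2)).2 + (sternBrocot n (k / 2 + 1)).2)

/-- Numerator `p(n,k)`. -/
def sbp (n k : ℕ) : ℕ := (sternBrocot n k).1

/-- Denominator `q(n,k)`. -/
def sbq (n k : ℕ) : ℕ := (sternBrocot n k).2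

/-!
Neighbouring level-`n` entries `(p, q)`, `(p', q')` satisfy `p' q - p q' = 1` and `q + q' ≥ n + 2`,
both invariants being preserved when a mediant is inserted between them. The first makes the gap
`1 / (q q')`, and the second with `q, q' ≥ 1` gives `q q' ≥ q + q' - 1 ≥ n + 1`. The first gap,
between `0/1` and `1/(n+1)`, attains the bound.
-/

lemma sternBrocot_succ_two_mul (n k : ℕ) : sternBrocot (n + 1) (2 * k) = sternBrocot n k := by
  simp [sternBrocot]

lemma sternBrocot_succ_two_mul_add_one (n k : ℕ) :
    sternBrocot (n + 1) (2 * k + 1) = sternBrocot n k + sternBrocot n (k + 1) := by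
  rw [sternBrocot, if_neg (by omega), show (2 * k + 1) / 2 = k by omega]
  rfl

lemma sternBrocot_zero_right : ∀ n, sternBrocot n 0 = (0, 1)
  | 0 => rfl
  | n + 1 => by simpa [sternBrocot_zero_right n] using sternBrocot_succ_two_mul n 0

lemma sternBrocot_one_right : ∀ n, sternBrocot n 1 = (1, n + 1)
  | 0 => rfl
  | n + 1 => by
    simpa [sternBrocot_zero_right, sternBrocot_one_right n, add_comm]
      using sternBrocot_succ_two_mul_add_one n 0

theorem sternBrocot_neighbours_induction {P : ℕ → ℕ × ℕ → ℕ × ℕ → Prop}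
    (zero : P 0 (0, 1) (1, 1))
    (left : ∀ n a b, P n a b → P (n + 1) a (a + b))
    (right : ∀ n a b, P n a b → P (n + 1) (a + b) b) :
    ∀ n k, k < 2 ^ n → P n (sternBrocot n k) (sternBrocot n (k + 1))
  | 0, 0, _ => zero
  | 0, _ + 1, hk => by simp at hk
  | n + 1, k, hk => by
    obtain ⟨m, rfl | rfl⟩ := Nat.even_or_odd' k
    · rw [sternBrocot_succ_two_mul, sternBrocot_succ_two_mul_add_one]
      exact left n _ _ (sternBrocot_neighbours_induction zero left right n m (by omega))
    · rw [show 2 * m + 1 + 1 = 2 * (m + 1) by ring, sternBrocot_succ_two_mul,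
        sternBrocot_succ_two_mul_add_one]
      exact right n _ _ (sternBrocot_neighbours_induction zero left right n m (by omega))

lemma sbp_succ_mul_sbq {n k : ℕ} (hk : k < 2 ^ n) :
    sbp n (k + 1) * sbq n k = sbp n k * sbq n (k + 1) + 1 := by
  refine sternBrocot_neighbours_induction (P := fun _ a b ↦ b.1 * a.2 = a.1 * b.2 + 1)
    rfl (fun _ a b h ↦ ?_) (fun _ a b h ↦ ?_) n k hk
  all_goals simp only [Prod.fst_add, Prod.snd_add]; linear_combination h

lemma sbq_pos_and_add_le {n k : ℕ} (hk : k < 2 ^ n) :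
    0 < sbq n k ∧ 0 < sbq n (k + 1) ∧ n + 2 ≤ sbq n k + sbq n (k + 1) := by
  refine sternBrocot_neighbours_induction
    (P := fun n a b ↦ 0 < a.2 ∧ 0 < b.2 ∧ n + 2 ≤ a.2 + b.2)
    (by decide) (fun _ a b h ↦ ?_) (fun _ a b h ↦ ?_) n k hk
  all_goals simp only [Prod.snd_add]; omega

lemma le_sbq_mul_sbq_succ {n k : ℕ} (hk : k < 2 ^ n) : n + 1 ≤ sbq n k * sbq n (k + 1) := by
  obtain ⟨hq, hq', hsum⟩ := sbq_pos_and_add_le hk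
  nlinarith [Nat.mul_le_mul (Nat.sub_le_sub_right hq 1) (Nat.sub_le_sub_right hq' 1)]

lemma sternBrocot_gap_eq {n k : ℕ} (hk : k < 2 ^ n) :
    (sbp n (k + 1) : ℚ) / sbq n (k + 1) - (sbp n k : ℚ) / sbq n k
      = 1 / ((sbq n k : ℚ) * sbq n (k + 1)) := by
  obtain ⟨hq, hq', -⟩ := sbq_pos_and_add_le hk
  have hdet : (sbp n (k + 1) * sbq n k : ℚ) = sbp n k * sbq n (k + 1) + 1 := by
    exact_mod_cast sbp_succ_mul_sbq hk
  field_simp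
  linear_combination hdet

/-- The largest gap between consecutive level-`n` Stern–Brocot fractions
equals `1/(n+1)`:
`max { r(n,k+1) − r(n,k) : 0 ≤ k < 2^n } = 1/(n+1)`. -/
theorem sternBrocot_max_gap (n : ℕ) :
    IsGreatest
      {d : ℚ | ∃ k < 2 ^ n,
        d = (sbp n (k + 1) : ℚ) / (sbq n (k + 1) : ℚ) - (sbp n k : ℚ) / (sbq n k : ℚ)}
      (1 / ((n : ℚ) + 1)) := by
  constructor
  · refine ⟨0, Nat.two_pow_pos n, ?_⟩
    simp [sbp, sbq, sternBrocot_zero_right, sternBrocot_one_right]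
  · rintro _ ⟨k, hk, rfl⟩
    rw [sternBrocot_gap_eq hk]
    exact one_div_le_one_div_of_le (by positivity) (by exact_mod_cast le_sbq_mul_sbq_succ hk)
end

section
/- Every rational number x with 0 ≤ x ≤ 1 occurs in the Stern–Brocot array: there exist n ≥ 0 and 0 ≤ k ≤ 2^n with r(n,k) = x. -/
lemma sb_even (n k : ℕ) : sternBrocot (n+1) (2*k) = sternBrocot n k := by
  simp [sternBrocot, Nat.mul_mod_right, Nat.mul_div_cancel_left]

lemma sb_odd (n k : ℕ) : sternBrocot (n+1) (2*k+1) =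
    ((sternBrocot n k).1 + (sternBrocot n (k+1)).1,
     (sternBrocot n k).2 + (sternBrocot n (k+1)).2) := by
  have h1 : (2*k+1) % 2 = 1 := by omega
  have h2 : (2*k+1) / 2 = k := by omega
  simp [sternBrocot, h1, h2]

lemma sbp_even (n k : ℕ) : sbp (n+1) (2*k) = sbp n k := by simp [sbp, sb_even]
lemma sbq_even (n k : ℕ) : sbq (n+1) (2*k) = sbq n k := by simp [sbq, sb_even]
lemma sbp_odd (n k : ℕ) : sbp (n+1) (2*k+1) = sbp n k + sbp n (k+1) := by simp [sbp, sb_odd]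
lemma sbq_odd (n k : ℕ) : sbq (n+1) (2*k+1) = sbq n k + sbq n (k+1) := by simp [sbq, sb_odd]

lemma sbq_pos (n k : ℕ) : 0 < sbq n k := by
  induction n generalizing k with
  | zero => match k with
    | 0 => decide
    | _+1 => simp [sbq, sternBrocot]
  | succ n ih =>
    rcases Nat.even_or_odd k with ⟨j, hj⟩ | ⟨j, hj⟩
    · subst hj; rw [show j + j = 2*j by ring, sbq_even]; exact ih j
    · subst hj; rw [sbq_odd]; have := ih j; omega

lemma sb_det (n : ℕ) : ∀ k, k + 1 ≤ 2^n →
    sbp n (k+1) * sbq n k = sbp n k * sbq n (k+1) + 1 := by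
  induction n with
  | zero =>
    intro k hk
    have : k = 0 := by simpa using hk
    subst this
    decide
  | succ n ih =>
    intro k hk
    rcases Nat.even_or_odd k with ⟨j, hj⟩ | ⟨j, hj⟩
    · subst hj
      have hj2 : j + 1 ≤ 2^n := by
        have : 2*j + 1 ≤ 2^(n+1) := by omega
        rw [pow_succ] at this; omega
      have := ih j hj2
      rw [show j + j = 2*j by ring, show 2*j+1 = 2*j+1 from rfl,
        sbp_odd, sbq_odd, sbp_even, sbq_even]
      ring_nf
      ring_nf at this
      nlinarith [this]
    · subst hj
      have hj2 : j + 1 ≤ 2^n := by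
        have : 2*j + 2 ≤ 2^(n+1) := by omega
        rw [pow_succ] at this; omega
      have := ih j hj2
      rw [show 2*j+1+1 = 2*(j+1) by ring, sbp_even, sbq_even,
        show 2*j+1 = 2*j+1 from rfl, sbp_odd, sbq_odd]
      nlinarith [this]

lemma between_den {a b c d : ℕ} (hb : 0 < b) (hd : 0 < d)
    (hdet : c * b = a * d + 1) {x : ℚ}
    (h1 : (a:ℚ)/b < x) (h2 : x < (c:ℚ)/d) : b + d ≤ x.den := by
  have hv : (0:ℚ) < (x.den : ℚ) := by positivity
  have hxe : x = (x.num : ℚ) / (x.den : ℚ) := (Rat.num_div_den x).symm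
  have hb' : (0:ℚ) < (b:ℚ) := by exact_mod_cast hb
  have hd' : (0:ℚ) < (d:ℚ) := by exact_mod_cast hd
  rw [hxe] at h1 h2
  rw [div_lt_div_iff₀ hb' hv] at h1
  rw [div_lt_div_iff₀ hv hd'] at h2
  have e1 : (a:ℤ) * x.den < x.num * b := by exact_mod_cast h1
  have e2 : (x.num : ℤ) * d < c * x.den := by exact_mod_cast h2
  have hdet' : (c:ℤ) * b = a * d + 1 := by exact_mod_cast hdet
  have key : (b:ℤ) + d ≤ x.den := by nlinarith [e1, e2, hdet']
  exact_mod_cast key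

lemma sb_main : ∀ t n k, k + 1 ≤ 2^n → ∀ x : ℚ,
    (sbp n k : ℚ) / (sbq n k : ℚ) ≤ x → x ≤ (sbp n (k+1) : ℚ) / (sbq n (k+1) : ℚ) →
    2 * x.den ≤ sbq n k + sbq n (k+1) + t →
    ∃ m j : ℕ, j ≤ 2 ^ m ∧ (sbp m j : ℚ) / (sbq m j : ℚ) = x := by
  intro t
  induction t with
  | zero =>
    intro n k hk x hl hr hden
    rcases eq_or_lt_of_le hl with heq | hl
    · exact ⟨n, k, by omega, heq⟩
    rcases eq_or_lt_of_le hr with heq | hr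
    · exact ⟨n, k+1, hk, heq.symm⟩
    have := between_den (sbq_pos n k) (sbq_pos n (k+1)) (sb_det n k hk) hl hr
    have := x.pos
    omega
  | succ t ih =>
    intro n k hk x hl hr hden
    rcases eq_or_lt_of_le hl with heq | hl
    · exact ⟨n, k, by omega, heq⟩
    rcases eq_or_lt_of_le hr with heq | hr
    · exact ⟨n, k+1, hk, heq.symm⟩
    have hqk := sbq_pos n k
    have hqk1 := sbq_pos n (k+1)
    have hk1 : 2*k + 1 + 1 ≤ 2^(n+1) := by rw [pow_succ]; omega
    rcases le_or_gt x ((sbp (n+1) (2*k+1) : ℚ) / (sbq (n+1) (2*k+1) : ℚ)) with hm | hm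
    · -- left half: positions 2k, 2k+1
      apply ih (n+1) (2*k) (by omega) x
      · rw [sbp_even, sbq_even]; exact le_of_lt hl
      · exact hm
      · rw [sbq_even, sbq_odd]; omega
    · -- right half: positions 2k+1, 2k+2
      apply ih (n+1) (2*k+1) hk1 x
      · exact le_of_lt hm
      · rw [show 2*k+1+1 = 2*(k+1) by ring, sbp_even, sbq_even]; exact le_of_lt hr
      · rw [show 2*k+1+1 = 2*(k+1) by ring, sbq_even, sbq_odd]; omega


/-- Every rational `x ∈ [0,1]` occurs in the Stern–Brocot array:
there are `n ≥ 0` and `k ≤ 2^n` with `r(n,k) = x`. -/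
theorem sternBrocot_surjective (x : ℚ) (hx0 : 0 ≤ x) (hx1 : x ≤ 1) :
    ∃ n k : ℕ, k ≤ 2 ^ n ∧ (sbp n k : ℚ) / (sbq n k : ℚ) = x := by
  apply sb_main (2 * x.den) 0 0 (by norm_num) x
  · show (sbp 0 0 : ℚ) / (sbq 0 0 : ℚ) ≤ x
    simp [sbp, sbq, sternBrocot]
    exact hx0
  · show x ≤ (sbp 0 1 : ℚ) / (sbq 0 1 : ℚ)
    simp [sbp, sbq, sternBrocot]
    exact hx1
  · show 2 * x.den ≤ sbq 0 0 + sbq 0 1 + 2 * x.den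
    omega
end
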